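/- Consider the capacitated graph obtained from the complete graph K₄ on vertices {u, v, w, t} by deleting the edge uv, assigning capacity (4,1) ⊆ ℝ/5ℤ to the edges uw and vw, and capacity (1,4) to the edges ut, vt, and wt. The open 5-capacity of the resulting capacitated g-edge with terminals u and v equals (1,4). (This g-edge is called the thick (1,4)-edge.) -/

import Mathlib

open Finset


open Finset

/-- A finite multigraph given with a reference orientation: each edge `e` goes
from `src e` to `tgt e`.  An orientation of the graph is a sign function
`σ : E → ℤˣ` telling, for each edge, whether it keeps (`1`) or reverses (`-1`)
its reference direction. -/
structure Multigraph where
  V : Type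
  E : Type
  [fintV : Fintype V]
  [fintE : Fintype E]
  [decV : DecidableEq V]
  [decE : DecidableEq E]
  src : E → V
  tgt : E → V

attribute [instance] Multigraph.fintV Multigraph.fintE Multigraph.decV Multigraph.decE

/-- `f` is a flow with respect to the reference orientation: at every vertex the
sum over outgoing edges equals the sum over incoming edges. -/
def Multigraph.IsFlow (G : Multigraph) {M : Type*} [AddCommMonoid M] (f : G.E → M) : Prop :=
  ∀ v : G.V,
    ∑ e ∈ Finset.univ.filter (fun e => G.src e = v), f e =
    ∑ e ∈ Finset.univ.filter (fun e => G.tgt e = v), f e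

/-- `f` is a flow on the orientation `σ` of `G` (values of `f` are read in the
direction given by `σ`). -/
def Multigraph.IsFlowOn (G : Multigraph) {M : Type*} [AddCommGroup M]
    (σ : G.E → ℤˣ) (f : G.E → M) : Prop :=
  G.IsFlow (fun e => ((σ e : ℤ) • f e))

/-- The open interval `(a,b)` of `ℝ/rℤ`: the points traversed strictly clockwise
from `a` to `b`, with the convention `(a,a) = ℝ/rℤ \ {a}`. -/
noncomputable def openArc (r a b : ℝ) : Set (AddCircle r) :=
  (fun t : ℝ => (t : AddCircle r)) '' Set.Ioo a (a + (r - Int.fract ((a - b) / r) * r))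

/-- The closed interval `[a,b]` of `ℝ/rℤ`: the points traversed clockwise from
`a` to `b`, endpoints included, with the convention `[a,a] = {a}`. -/
noncomputable def closedArc (r a b : ℝ) : Set (AddCircle r) :=
  (fun t : ℝ => (t : AddCircle r)) '' Set.Icc a (a + Int.fract ((b - a) / r) * r)

/-- `G` has a circular nowhere-zero `r`-flow: an orientation together with a
real-valued flow all of whose values lie in `[1, r-1]`. -/
def Multigraph.HasCNZF (G : Multigraph) (r : ℝ) : Prop :=
  ∃ (σ : G.E → ℤˣ) (f : G.E → ℝ), G.IsFlowOn σ f ∧ ∀ e, f e ∈ Set.Icc (1:ℝ) (r - 1)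

/-- The circular flow number of `G`, as an extended real (`⊤` if `G` admits no
circular nowhere-zero `r`-flow for any `r`, e.g. if `G` has a bridge). -/
noncomputable def circFlowNumber (G : Multigraph) : EReal :=
  sInf {x : EReal | ∃ r : ℝ, x = (r : EReal) ∧ G.HasCNZF r}

/-- The graph `G ∪ e₀` obtained from `G` by adding one extra edge `e₀ = none`
joining `u` to `v`. -/
def Multigraph.addEdge (G : Multigraph) (u v : G.V) : Multigraph where
  V := G.V
  E := Option G.E
  src := fun e => e.elim u G.src
  tgt := fun e => e.elim v G.tgt

/-- The capacity of the capacitated g-edge `(G, cap)` with terminals `u,v`: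
all values `f e₀` of modular flows `f` on `G ∪ e₀` (over all orientations) whose
value on each edge `e` of `G` lies in the prescribed set `cap e`. -/
def CPcap (r : ℝ) (G : Multigraph) (cap : G.E → Set (AddCircle r)) (u v : G.V) :
    Set (AddCircle r) :=
  {t | ∃ (σ : Option G.E → ℤˣ) (f : Option G.E → AddCircle r),
        (G.addEdge u v).IsFlowOn σ f ∧ (∀ e : G.E, f (some e) ∈ cap e) ∧ f none = t}

/-- The open `r`-capacity `CP_r(G_{u,v})` of the g-edge `G_{u,v}`. -/
noncomputable def CP (r : ℝ) (G : Multigraph) (u v : G.V) : Set (AddCircle r) :=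
  CPcap r G (fun _ => openArc r 1 (r - 1)) u v

/-- A capacitated graph `(G, cap)` admits a flow respecting all capacities
(for `cap e = (1,4) ⊆ ℝ/5ℤ` everywhere this is a sub-5-MCNZF). -/
def HasCapFlow (r : ℝ) (G : Multigraph) (cap : G.E → Set (AddCircle r)) : Prop :=
  ∃ (σ : G.E → ℤˣ) (f : G.E → AddCircle r), G.IsFlowOn σ f ∧ ∀ e, f e ∈ cap e

/-- Deletion of the edge `e₀`. -/
def Multigraph.deleteEdge (G : Multigraph) (e₀ : G.E) : Multigraph where
  V := G.V
  E := {e : G.E // e ≠ e₀}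
  src := fun e => G.src e.1
  tgt := fun e => G.tgt e.1

/-- Degree of a vertex (loops count twice). -/
def Multigraph.degree (G : Multigraph) (v : G.V) : ℕ :=
  (Finset.univ.filter (fun e => G.src e = v)).card +
  (Finset.univ.filter (fun e => G.tgt e = v)).card

/-- The tail of edge `e` in the orientation `σ`. -/
def Multigraph.osrc (G : Multigraph) (σ : G.E → ℤˣ) (e : G.E) : G.V :=
  if σ e = 1 then G.src e else G.tgt e

/-- The head of edge `e` in the orientation `σ`. -/
def Multigraph.otgt (G : Multigraph) (σ : G.E → ℤˣ) (e : G.E) : G.V :=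
  if σ e = 1 then G.tgt e else G.src e

/-- `K₄` on the vertices `u = 0`, `v = 1`, `w = 2`, `t = 3`, with the edge `uv`
deleted.  The five remaining edges, in order, are `uw, vw, ut, vt, wt`. -/
def K4minus : Multigraph where
  V := Fin 4
  E := Fin 5
  src := ![0, 1, 0, 1, 2]
  tgt := ![2, 2, 3, 3, 3]

/-- Capacities of the thick `(1,4)`-edge: `(4,1)` on `uw` and `vw`, `(1,4)` on
`ut`, `vt` and `wt`. -/
noncomputable def thickCap : K4minus.E → Set (AddCircle (5 : ℝ)) :=
  ![openArc 5 4 1, openArc 5 4 1, openArc 5 1 4, openArc 5 1 4, openArc 5 1 4]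

/-!
Read every edge in its reference direction (the capacities are symmetric under negation) and lift
its value to ℝ: `uw, vw` carry `a, b ∈ (-1,1)` and `ut, vt` carry `c, d ∈ (1,4)`. Conservation
at `w` puts `a + b` in `(1,4)` modulo 5, so `|a + b| > 1` and `a, b` have the same sign. The value
on `e₀` is `b + d` by conservation at `v` and `-(a + c)` by conservation at `u`; by the sign of
`a, b` one of them lies in `(1,5)` and the other in `(0,4)` modulo 5, whose intersection is
`(1,4)`. Conversely, every `t ∈ (1,4)` is the value on `e₀` of a real flow in which `ut` is
reversed.
-/

instance : Fact ((0 : ℝ) < 5) := ⟨by norm_num⟩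

theorem zsmul_units_mem_of_neg_mem {G : Type*} [AddGroup G] {S : Set G}
    (hS : ∀ x ∈ S, -x ∈ S) (u : ℤˣ) {x : G} (hx : x ∈ S) : (u : ℤ) • x ∈ S := by
  rcases Int.units_eq_one_or u with rfl | rfl
  · simpa using hx
  · simpa using hS x hx

namespace Multigraph

theorem IsFlow.map {G : Multigraph} {M N : Type*} [AddCommMonoid M] [AddCommMonoid N]
    (φ : M →+ N) {f : G.E → M} (hf : G.IsFlow f) : G.IsFlow (φ ∘ f) := fun v => by
  simp only [Function.comp_apply, ← map_sum, hf v]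

theorem IsFlowOn.map {G : Multigraph} {M N : Type*} [AddCommGroup M] [AddCommGroup N]
    (φ : M →+ N) {σ : G.E → ℤˣ} {f : G.E → M} (hf : G.IsFlowOn σ f) :
    G.IsFlowOn σ (φ ∘ f) := by
  simpa only [IsFlowOn, Function.comp_def, map_zsmul] using IsFlow.map φ hf

theorem isFlow_addEdge_iff {G : Multigraph} {u v : G.V} {M : Type*}
    [AddCommMonoid M] (g : (G.addEdge u v).E → M) :
    (G.addEdge u v).IsFlow g ↔ ∀ x : G.V,
      (if u = x then g none else 0) + ∑ e with G.src e = x, g (some e) =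
        (if v = x then g none else 0) + ∑ e with G.tgt e = x, g (some e) := by
  refine forall_congr' fun x => ?_
  simp only [Finset.sum_filter]
  exact Iff.of_eq (congrArg₂ _ (Fintype.sum_option _) (Fintype.sum_option _))

end Multigraph

namespace AddCircle

variable {p : ℝ}

theorem neg_mem_image_Ioo {a b : ℝ} (hab : ((a + b : ℝ) : AddCircle p) = 0) {x : AddCircle p}
    (hx : x ∈ ((↑) : ℝ → AddCircle p) '' Set.Ioo a b) :
    -x ∈ ((↑) : ℝ → AddCircle p) '' Set.Ioo a b := by
  obtain ⟨y, ⟨hay, hyb⟩, rfl⟩ := hx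
  refine ⟨a + b - y, ⟨by linarith, by linarith⟩, ?_⟩
  rw [coe_sub, hab, zero_sub]

theorem mem_Ioo_of_coe_mem_image_Ioo [Fact (0 < p)] {lo a b x : ℝ}
    (hx : x ∈ Set.Ico lo (lo + p)) (ha : lo ≤ a) (hb : b ≤ lo + p)
    (h : (x : AddCircle p) ∈ ((↑) : ℝ → AddCircle p) '' Set.Ioo a b) :
    x ∈ Set.Ioo a b := by
  obtain ⟨y, hy, hyx⟩ := h
  rwa [← (coe_eq_coe_iff_of_mem_Ico ⟨ha.trans hy.1.le, hy.2.trans_le hb⟩ hx).1 hyx]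

end AddCircle

theorem openArc_one_four :
    openArc 5 1 4 = ((↑) : ℝ → AddCircle (5 : ℝ)) '' Set.Ioo 1 4 := by
  norm_num [openArc, Int.fract]

theorem openArc_four_one :
    openArc 5 4 1 = ((↑) : ℝ → AddCircle (5 : ℝ)) '' Set.Ioo (-1) 1 := by
  have : Set.Ioo (4 : ℝ) 6 = (· + 5) '' Set.Ioo (-1) 1 := by norm_num
  have h : openArc 5 4 1 = ((↑) : ℝ → AddCircle (5 : ℝ)) '' Set.Ioo 4 6 := by
    norm_num [openArc, Int.fract]
  rw [h, this, Set.image_image]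
  simp only [AddCircle.coe_add_period]

theorem K4minus_sum {M : Type*} [AddCommMonoid M] (g : K4minus.E → M) :
    ∑ e, g e = g (0 : Fin 5) + g (1 : Fin 5) + g (2 : Fin 5) + g (3 : Fin 5) + g (4 : Fin 5) :=
  Fin.sum_univ_five g

theorem K4minus_addEdge_isFlow_iff {M : Type*} [AddCommMonoid M] (g : Option (Fin 5) → M) :
    (K4minus.addEdge ((0 : Fin 4) : K4minus.V) ((1 : Fin 4) : K4minus.V)).IsFlow g ↔
      g none + (g (some 0) + g (some 2)) = 0 ∧ g (some 1) + g (some 3) = g none ∧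
        g (some 4) = g (some 0) + g (some 1) ∧ 0 = g (some 2) + (g (some 3) + g (some 4)) := by
  refine (Multigraph.isFlow_addEdge_iff (G := K4minus) (u := (0 : Fin 4)) (v := (1 : Fin 4))
    g).trans ?_
  simp only [Finset.sum_filter, K4minus_sum]
  change (∀ x : Fin 4, _) ↔ _
  simp [Fin.forall_fin_succ, K4minus, add_assoc]

theorem neg_mem_openArc_one_four {x : AddCircle (5 : ℝ)} (hx : x ∈ openArc 5 1 4) :
    -x ∈ openArc 5 1 4 := by
  rw [openArc_one_four] at hx ⊢
  exact AddCircle.neg_mem_image_Ioo (by norm_num [AddCircle.coe_period]) hx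

theorem neg_mem_openArc_four_one {x : AddCircle (5 : ℝ)} (hx : x ∈ openArc 5 4 1) :
    -x ∈ openArc 5 4 1 := by
  rw [openArc_four_one] at hx ⊢
  exact AddCircle.neg_mem_image_Ioo (by norm_num) hx

theorem neg_mem_thickCap (e : K4minus.E) {x : AddCircle (5 : ℝ)} (hx : x ∈ thickCap e) :
    -x ∈ thickCap e := by
  fin_cases e
  all_goals first
    | exact neg_mem_openArc_four_one hx
    | exact neg_mem_openArc_one_four hx

theorem same_sign_of_coe_add_mem_openArc {a b : ℝ} (ha : a ∈ Set.Ioo (-1) 1)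
    (hb : b ∈ Set.Ioo (-1) 1) (h : ((a + b : ℝ) : AddCircle (5 : ℝ)) ∈ openArc 5 1 4) :
    (0 < a ∧ 0 < b) ∨ (a < 0 ∧ b < 0) := by
  obtain ⟨ha₁, ha₂⟩ := ha
  obtain ⟨hb₁, hb₂⟩ := hb
  rw [openArc_one_four] at h
  rcases le_or_gt 0 (a + b) with hs | hs
  · have := AddCircle.mem_Ioo_of_coe_mem_image_Ioo ⟨hs, by linarith⟩ zero_le_one
      (by norm_num) h
    exact Or.inl ⟨by linarith [this.1], by linarith [this.1]⟩
  · rw [← AddCircle.coe_add_period] at h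
    have := AddCircle.mem_Ioo_of_coe_mem_image_Ioo ⟨by linarith, by linarith⟩ zero_le_one
      (by norm_num) h
    exact Or.inr ⟨by linarith [this.2], by linarith [this.2]⟩

theorem mem_openArc_one_four_of_lifts {x : AddCircle (5 : ℝ)}
    {y z : ℝ} (hy : y ∈ Set.Ioo 1 5) (hz : z ∈ Set.Ioo 0 4) (hxy : x = y) (hxz : x = z) :
    x ∈ openArc 5 1 4 := by
  subst hxy
  have := AddCircle.mem_Ioo_of_coe_mem_image_Ioo (lo := 0) (a := 0) (b := 4)
    ⟨by linarith [hy.1], by linarith [hy.2]⟩ le_rfl (by norm_num) ⟨z, hz, hxz.symm⟩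
  rw [openArc_one_four]
  exact ⟨y, ⟨hy.1, this.2⟩, rfl⟩

theorem mem_openArc_one_four_of_conservation {x α β γ δ ε : AddCircle (5 : ℝ)}
    (hα : α ∈ openArc 5 4 1) (hβ : β ∈ openArc 5 4 1) (hγ : γ ∈ openArc 5 1 4)
    (hδ : δ ∈ openArc 5 1 4) (hε : ε ∈ openArc 5 1 4) (hu : x + (α + γ) = 0) (hv : β + δ = x) (hw : ε = α + β) :
    x ∈ openArc 5 1 4 := by
  rw [openArc_four_one] at hα hβ
  rw [openArc_one_four] at hγ hδ
  obtain ⟨a, ⟨ha₁, ha₂⟩, rfl⟩ := hα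
  obtain ⟨b, ⟨hb₁, hb₂⟩, rfl⟩ := hβ
  obtain ⟨c, ⟨hc₁, hc₂⟩, rfl⟩ := hγ
  obtain ⟨d, ⟨hd₁, hd₂⟩, rfl⟩ := hδ
  have hv' : x = ((b + d : ℝ) : AddCircle (5 : ℝ)) := hv.symm
  have hu' : x = ((-(a + c) + 5 : ℝ) : AddCircle (5 : ℝ)) := by
    rw [AddCircle.coe_add_period, AddCircle.coe_neg, AddCircle.coe_add]
    exact eq_neg_of_add_eq_zero_left hu
  rcases same_sign_of_coe_add_mem_openArc ⟨ha₁, ha₂⟩ ⟨hb₁, hb₂⟩ (by rwa [hw] at hε) with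
    ⟨ha_pos, hb_pos⟩ | ⟨ha_neg, hb_neg⟩
  · exact mem_openArc_one_four_of_lifts
      ⟨by linarith, by linarith⟩ ⟨by linarith, by linarith⟩ hv' hu'
  · exact mem_openArc_one_four_of_lifts
      ⟨by linarith, by linarith⟩ ⟨by linarith, by linarith⟩ hu' hv'

theorem exists_lifts_of_mem_Ioo_one_four {t : ℝ} (ht : t ∈ Set.Ioo 1 4) :
    ∃ a b : ℝ, a ∈ Set.Ioo (-1) 1 ∧ b ∈ Set.Ioo (-1) 1 ∧ t + a ∈ Set.Ioo 1 4 ∧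
      t - b ∈ Set.Ioo 1 4 ∧ a + b ∈ Set.Ioo 1 4 := by
  obtain ⟨ht₁, ht₂⟩ := ht
  rcases le_or_gt t (5 / 2) with h | h
  · refine ⟨1 - (t - 1) / 4, (t - 1) / 2, ?_⟩
    refine ⟨⟨?_, ?_⟩, ⟨?_, ?_⟩, ⟨?_, ?_⟩, ⟨?_, ?_⟩, ⟨?_, ?_⟩⟩ <;> linarith
  · refine ⟨(4 - t) / 2, 1 - (4 - t) / 4, ?_⟩
    refine ⟨⟨?_, ?_⟩, ⟨?_, ?_⟩, ⟨?_, ?_⟩, ⟨?_, ?_⟩, ⟨?_, ?_⟩⟩ <;> linarith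

theorem CPcap_thickCap_subset :
    CPcap 5 K4minus thickCap ((0 : Fin 4) : K4minus.V) ((1 : Fin 4) : K4minus.V) ⊆
      openArc 5 1 4 := by
  rintro _ ⟨σ, f, hflow, hcap, rfl⟩
  set g : Option (Fin 5) → AddCircle (5 : ℝ) := fun e => (σ e : ℤ) • f e
  have hg (e : Fin 5) : g (some e) ∈ thickCap e :=
    zsmul_units_mem_of_neg_mem (fun _ => neg_mem_thickCap e) _ (hcap e)
  obtain ⟨hu, hv, hw, -⟩ := (K4minus_addEdge_isFlow_iff g).1 hflow
  have hf : f none = (σ none : ℤ) • (σ none : ℤ) • f none := by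
    rw [smul_smul, ← Units.val_mul, Int.units_mul_self, Units.val_one, one_smul]
  rw [hf]
  exact zsmul_units_mem_of_neg_mem (fun _ => neg_mem_openArc_one_four) _
    (mem_openArc_one_four_of_conservation (hg 0) (hg 1) (hg 2) (hg 3) (hg 4) hu hv hw)

theorem openArc_subset_CPcap_thickCap :
    openArc 5 1 4 ⊆
      CPcap 5 K4minus thickCap ((0 : Fin 4) : K4minus.V) ((1 : Fin 4) : K4minus.V) := by
  rw [openArc_one_four]
  rintro _ ⟨t, ht, rfl⟩
  obtain ⟨a, b, ha, hb, hc, hd, he⟩ := exists_lifts_of_mem_Ioo_one_four ht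
  let F : Option (Fin 5) → ℝ := fun e => e.elim t ![a, b, t + a, t - b, a + b]
  let σ : Option (Fin 5) → ℤˣ := fun e => if e = some 2 then -1 else 1
  have hF : (K4minus.addEdge ((0 : Fin 4) : K4minus.V) ((1 : Fin 4) : K4minus.V)).IsFlowOn σ F :=
    (K4minus_addEdge_isFlow_iff _).2 (by simp [σ, F]; ring)
  refine ⟨σ, (↑) ∘ F, hF.map (QuotientAddGroup.mk' _), fun e => ?_, rfl⟩
  fin_cases e
  all_goals
    simp only [thickCap, openArc_four_one, openArc_one_four]
    exact ⟨_, ‹_›, rfl⟩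

/-- The open 5-capacity of the thick `(1,4)`-edge — obtained
from `K₄` by deleting the edge `uv` of a triangle `uvw` and giving capacity
`(4,1)` to the other two edges `uw, vw` of that triangle, and `(1,4)` to the
remaining edges — with terminals `u` and `v`, equals `(1,4)`. -/
theorem thick_edge_capacity :
    CPcap 5 K4minus thickCap ((0 : Fin 4) : K4minus.V) ((1 : Fin 4) : K4minus.V)
      = openArc 5 1 4 :=
  CPcap_thickCap_subset.antisymm openArc_subset_CPcap_thickCap
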